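/- Fix an integer 0 ≤ i ≤ k−1 with A_i ≠ ∅ and vertices x, y ∈ V, and let m = max{d_G(x, p_i(x)), d_G(y, p_i(y)), d_G(x, y)}. Then at least one of the following holds: (1) d_H(x, y) ≤ 5m; or (2) A_{i+1} ≠ ∅ and d_H(x, p_{i+1}(x)) ≤ 4m. -/

import Mathlib

open scoped ENNReal Classical

namespace ASP

variable {V : Type*}

noncomputable def wWeight {G : SimpleGraph V} (w : V → V → ℝ≥0∞) {x y : V}
    (p : G.Walk x y) : ℝ≥0∞ :=
  (p.darts.map fun d => w d.toProd.1 d.toProd.2).sum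

noncomputable def gdist (G : SimpleGraph V) (w : V → V → ℝ≥0∞) (x y : V) : ℝ≥0∞ :=
  ⨅ p : G.Walk x y, wWeight w p

noncomputable def maxW {G : SimpleGraph V} (w : V → V → ℝ≥0∞) {x y : V}
    (p : G.Walk x y) : ℝ≥0∞ :=
  (p.darts.map fun d => w d.toProd.1 d.toProd.2).foldr max 0

/-- The bunch of a vertex `u` of level `i`: all vertices of `A i` strictly closer to `u` than
`A (i+1)` (vacuously all of `A i` if `A (i+1) = ∅`), together with the pivots of all
nonempty higher levels. -/
def bunch (G : SimpleGraph V) (w : V → V → ℝ≥0∞) (A : ℕ → Set V) (pv : ℕ → V → V)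
    (k i : ℕ) (u : V) : Set V :=
  {v | v ∈ A i ∧ ∀ a ∈ A (i + 1), gdist G w u v < gdist G w u a} ∪
    {v | ∃ j, i < j ∧ j < k ∧ (A j).Nonempty ∧ v = pv j u}

/-- The emulator graph `H`: an edge `{u, v}` for every `u ∈ A i \ A (i+1)` and `v ∈ B(u)`. -/
def emulGraph (G : SimpleGraph V) (w : V → V → ℝ≥0∞) (A : ℕ → Set V) (pv : ℕ → V → V)
    (k : ℕ) : SimpleGraph V where
  Adj u v := u ≠ v ∧ ∃ i, (u ∈ A i ∧ u ∉ A (i + 1) ∧ v ∈ bunch G w A pv k i u) ∨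
      (v ∈ A i ∧ v ∉ A (i + 1) ∧ u ∈ bunch G w A pv k i v)
  symm := ⟨fun u v h => ⟨h.1.symm, h.2.imp fun _ hi => hi.symm⟩⟩
  loopless := ⟨fun u h => h.1 rfl⟩

/-!
Let `u = p_i(x)` and `v = p_i(y)`. If some vertex of `A_{i+1}` lies within `4m` of `x`, then so
does `p_{i+1}(x)`, and `x` reaches it in `H` within its `G`-distance. Otherwise `u ∉ A_{i+1}` and
every vertex of `A_{i+1}` is farther than `3m` from `u`, while `d_G(u, v) ≤ 3m`; hence `v ∈ B(u)`
and the path `x, u, v, y` in `H` has length at most `m + 3m + m`.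

With zero weights allowed, `d_H(z, p_j(z)) ≤ d_G(z, p_j(z))` needs care when `z ∈ A_j`, where
there may be no edge: then `d_G(z, p_j(z)) = 0`, and a downward induction on the level of `z`
shows that `d_G(z, z') = 0` forces `d_H(z, z') = 0`.
-/

section Distance

variable {G : SimpleGraph V} {w : V → V → ℝ≥0∞}

lemma gdist_le_wWeight {x y : V} (p : G.Walk x y) : gdist G w x y ≤ wWeight w p :=
  iInf_le _ p

lemma gdist_self (x : V) : gdist G w x x = 0 :=
  nonpos_iff_eq_zero.mp (gdist_le_wWeight (SimpleGraph.Walk.nil : G.Walk x x))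

lemma gdist_le_of_adj {x y : V} (h : G.Adj x y) : gdist G w x y ≤ w x y :=
  (gdist_le_wWeight (SimpleGraph.Walk.cons h SimpleGraph.Walk.nil)).trans (by simp [wWeight])

lemma wWeight_append {x y z : V} (p : G.Walk x y) (q : G.Walk y z) :
    wWeight w (p.append q) = wWeight w p + wWeight w q := by
  simp [wWeight, SimpleGraph.Walk.darts_append]

lemma gdist_triangle (x y z : V) : gdist G w x z ≤ gdist G w x y + gdist G w y z := by
  unfold gdist
  rw [ENNReal.iInf_add]
  refine le_iInf fun p => ?_
  rw [ENNReal.add_iInf]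
  exact le_iInf fun q => (gdist_le_wWeight (p.append q)).trans (wWeight_append p q).le

lemma wWeight_reverse (hwsym : ∀ u v, G.Adj u v → w u v = w v u) {x y : V} (p : G.Walk x y) :
    wWeight w p.reverse = wWeight w p := by
  unfold wWeight
  rw [SimpleGraph.Walk.darts_reverse, List.map_reverse, List.sum_reverse, List.map_map]
  refine congrArg List.sum (List.map_congr_left fun d _ => ?_)
  simpa using (hwsym _ _ d.adj).symm

lemma gdist_triangle4 (x y z t : V) :
    gdist G w x t ≤ gdist G w x y + gdist G w y z + gdist G w z t :=
  (gdist_triangle x z t).trans (add_le_add_left (gdist_triangle x y z) _)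

lemma gdist_comm (hwsym : ∀ u v, G.Adj u v → w u v = w v u) (x y : V) :
    gdist G w x y = gdist G w y x := by
  refine le_antisymm (le_iInf fun q => ?_) (le_iInf fun q => ?_) <;>
    exact iInf_le_of_le q.reverse (wWeight_reverse hwsym q).le

lemma gdist_eq_zero_trans {x y z : V} (hxy : gdist G w x y = 0) (hyz : gdist G w y z = 0) :
    gdist G w x z = 0 :=
  nonpos_iff_eq_zero.mp ((gdist_triangle x y z).trans (by simp [hxy, hyz]))

end Distance

section Levels

variable {A : ℕ → Set V} {k : ℕ}

lemma lt_of_level_nonempty (hAnest : ∀ i, A (i + 1) ⊆ A i) (hAk : A k = ∅) {j : ℕ}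
    (hAj : (A j).Nonempty) : j < k := by
  by_contra! hkj
  obtain ⟨z, hz⟩ := hAj
  simpa [hAk] using antitone_nat_of_succ_le hAnest hkj hz

lemma exists_level_of_notMem (hA0 : A 0 = Set.univ) {z : V} {j : ℕ} (hz : z ∉ A j) :
    ∃ l < j, z ∈ A l ∧ z ∉ A (l + 1) := by
  induction j with
  | zero => exact absurd (hA0 ▸ Set.mem_univ z) hz
  | succ j ih =>
    by_cases hzj : z ∈ A j
    · exact ⟨j, j.lt_succ_self, hzj, hz⟩
    · obtain ⟨l, hl, hzl, hzl'⟩ := ih hzj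
      exact ⟨l, hl.trans j.lt_succ_self, hzl, hzl'⟩

end Levels

section Emulator

variable {G : SimpleGraph V} {w : V → V → ℝ≥0∞} {A : ℕ → Set V} {pv : ℕ → V → V} {k : ℕ}

local notation "dG" => gdist G w
local notation "dH" => gdist (emulGraph G w A pv k) (gdist G w)

lemma gdist_emulGraph_le_of_mem_bunch {i : ℕ} {u v : V} (hu : u ∈ A i) (hu' : u ∉ A (i + 1))
    (hv : v ∈ bunch G w A pv k i u) : dH u v ≤ dG u v := by
  by_cases huv : u = v
  · simp [huv, gdist_self]
  · exact gdist_le_of_adj ⟨huv, i, Or.inl ⟨hu, hu', hv⟩⟩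

lemma gdist_emulGraph_pivot_le_of_notMem (hA0 : A 0 = Set.univ) {j : ℕ} (hjk : j < k)
    (hAj : (A j).Nonempty) {z : V} (hz : z ∉ A j) : dH z (pv j z) ≤ dG z (pv j z) := by
  obtain ⟨l, hlj, hzl, hzl'⟩ := exists_level_of_notMem hA0 hz
  exact gdist_emulGraph_le_of_mem_bunch hzl hzl' (Or.inr ⟨j, hlj, hjk, hAj, rfl⟩)

lemma gdist_emulGraph_comm (hwsym : ∀ u v, G.Adj u v → w u v = w v u) (x y : V) :
    dH x y = dH y x :=
  gdist_comm (fun a b _ => gdist_comm hwsym a b) x y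

lemma gdist_emulGraph_eq_zero (hwsym : ∀ u v, G.Adj u v → w u v = w v u)
    (hA0 : A 0 = Set.univ) (hAnest : ∀ i, A (i + 1) ⊆ A i) (hAk : A k = ∅)
    (hpv : ∀ i < k, ∀ v, (A i).Nonempty → pv i v ∈ A i ∧ ∀ a ∈ A i, dG v (pv i v) ≤ dG v a)
    {z z' : V} (hzz' : dG z z' = 0) : dH z z' = 0 := by
  suffices h : ∀ j ≤ k, ∀ z ∈ A j, ∀ z', dG z z' = 0 → dH z z' = 0 from
    h 0 k.zero_le z (hA0 ▸ Set.mem_univ z) z' hzz'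
  intro j hjk
  induction hjk using Nat.decreasingInduction with
  | self => simp [hAk]
  | of_succ j hjk ih =>
    intro z hzj z' hzz'
    by_cases hz1 : z ∈ A (j + 1)
    · exact ih z hz1 z' hzz'
    by_cases hnear : ∃ a ∈ A (j + 1), dG z a = 0
    · obtain ⟨a, ha, hza⟩ := hnear
      have hne : (A (j + 1)).Nonempty := ⟨a, ha⟩
      have hjk' := lt_of_level_nonempty hAnest hAk hne
      obtain ⟨hpA, hpmin⟩ := hpv (j + 1) hjk' z hne
      have hzp : dG z (pv (j + 1) z) = 0 := nonpos_iff_eq_zero.mp ((hpmin a ha).trans hza.le)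
      have hpz' : dG (pv (j + 1) z) z' = 0 :=
        gdist_eq_zero_trans ((gdist_comm hwsym _ _).trans hzp) hzz'
      refine gdist_eq_zero_trans (nonpos_iff_eq_zero.mp ?_) (ih _ hpA z' hpz')
      exact (gdist_emulGraph_pivot_le_of_notMem hA0 hjk' hne hz1).trans hzp.le
    push Not at hnear
    have hbunch : ∀ q ∈ A j, dG z q = 0 → dH z q = 0 := fun q hq hzq =>
      nonpos_iff_eq_zero.mp <| (gdist_emulGraph_le_of_mem_bunch hzj hz1
        (Or.inl ⟨hq, fun a ha => hzq ▸ pos_iff_ne_zero.mpr (hnear a ha)⟩)).trans hzq.le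
    by_cases hz'j : z' ∈ A j
    · exact hbunch z' hz'j hzz'
    obtain ⟨hqA, hqmin⟩ := hpv j hjk z' ⟨z, hzj⟩
    have hz'q : dG z' (pv j z') = 0 :=
      nonpos_iff_eq_zero.mp ((hqmin z hzj).trans (gdist_comm hwsym z' z ▸ hzz').le)
    refine gdist_eq_zero_trans (hbunch _ hqA (gdist_eq_zero_trans hzz' hz'q)) ?_
    rw [gdist_emulGraph_comm hwsym]
    exact nonpos_iff_eq_zero.mp
      ((gdist_emulGraph_pivot_le_of_notMem hA0 hjk ⟨z, hzj⟩ hz'j).trans hz'q.le)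

lemma gdist_emulGraph_pivot_le (hwsym : ∀ u v, G.Adj u v → w u v = w v u)
    (hA0 : A 0 = Set.univ) (hAnest : ∀ i, A (i + 1) ⊆ A i) (hAk : A k = ∅)
    (hpv : ∀ i < k, ∀ v, (A i).Nonempty → pv i v ∈ A i ∧ ∀ a ∈ A i, dG v (pv i v) ≤ dG v a)
    {j : ℕ} (hAj : (A j).Nonempty) (z : V) : dH z (pv j z) ≤ dG z (pv j z) := by
  have hjk := lt_of_level_nonempty hAnest hAk hAj
  by_cases hz : z ∈ A j
  · have hzp : dG z (pv j z) = 0 :=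
      nonpos_iff_eq_zero.mp (((hpv j hjk z hAj).2 z hz).trans (gdist_self z).le)
    rw [gdist_emulGraph_eq_zero hwsym hA0 hAnest hAk hpv hzp]
    exact zero_le
  · exact gdist_emulGraph_pivot_le_of_notMem hA0 hjk hAj hz

lemma gdist_emulGraph_le_five_mul (hwsym : ∀ u v, G.Adj u v → w u v = w v u)
    (hA0 : A 0 = Set.univ) (hAnest : ∀ i, A (i + 1) ⊆ A i) (hAk : A k = ∅)
    (hpv : ∀ i < k, ∀ v, (A i).Nonempty → pv i v ∈ A i ∧ ∀ a ∈ A i, dG v (pv i v) ≤ dG v a)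
    {i : ℕ} (hAi : (A i).Nonempty) {x y : V} {m : ℝ≥0∞} (hxu : dG x (pv i x) ≤ m)
    (hyv : dG y (pv i y) ≤ m) (hxy : dG x y ≤ m) (hfar : ∀ a ∈ A (i + 1), 4 * m < dG x a) :
    dH x y ≤ 5 * m := by
  have hi := lt_of_level_nonempty hAnest hAk hAi
  have huv : dG (pv i x) (pv i y) ≤ 3 * m := calc
    _ ≤ dG (pv i x) x + dG x y + dG y (pv i y) := gdist_triangle4 _ _ _ _
    _ ≤ m + m + m := by rw [gdist_comm hwsym]; gcongr
    _ = 3 * m := by ring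
  have hufar (a : V) (ha : a ∈ A (i + 1)) : 3 * m < dG (pv i x) a := by
    by_contra! hle
    refine (hfar a ha).not_ge ?_
    calc dG x a ≤ dG x (pv i x) + dG (pv i x) a := gdist_triangle _ _ _
      _ ≤ m + 3 * m := add_le_add hxu hle
      _ = 4 * m := by ring
  have hu : pv i x ∉ A (i + 1) := fun h => by simpa [gdist_self] using hufar _ h
  have hvB : pv i y ∈ bunch G w A pv k i (pv i x) :=
    Or.inl ⟨(hpv i hi y hAi).1, fun a ha => huv.trans_lt (hufar a ha)⟩
  calc _ ≤ _ := gdist_triangle4 x (pv i x) (pv i y) y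
    _ ≤ m + 3 * m + m := by
      rw [gdist_emulGraph_comm hwsym (pv i y)]
      gcongr
      · exact (gdist_emulGraph_pivot_le hwsym hA0 hAnest hAk hpv hAi x).trans hxu
      · exact (gdist_emulGraph_le_of_mem_bunch (hpv i hi x hAi).1 hu hvB).trans huv
      · exact (gdist_emulGraph_pivot_le hwsym hA0 hAnest hAk hpv hAi y).trans hyv
    _ = 5 * m := by ring

end Emulator

theorem statement1_general (G : SimpleGraph V)
    (w : V → V → ℝ≥0∞) (hwsym : ∀ u v, G.Adj u v → w u v = w v u)
    (k : ℕ) (A : ℕ → Set V) (hA0 : A 0 = Set.univ)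
    (hAnest : ∀ i, A (i + 1) ⊆ A i) (hAk : A k = ∅)
    (pv : ℕ → V → V)
    (hpv : ∀ i, i < k → ∀ v : V, (A i).Nonempty →
      pv i v ∈ A i ∧ ∀ a ∈ A i, gdist G w v (pv i v) ≤ gdist G w v a)
    (i : ℕ) (hAi : (A i).Nonempty) (x y : V) :
    gdist (emulGraph G w A pv k) (gdist G w) x y ≤
        5 * max (gdist G w x (pv i x)) (max (gdist G w y (pv i y)) (gdist G w x y)) ∨
      ((A (i + 1)).Nonempty ∧
        gdist (emulGraph G w A pv k) (gdist G w) x (pv (i + 1) x) ≤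
          4 * max (gdist G w x (pv i x)) (max (gdist G w y (pv i y)) (gdist G w x y))) := by
  set m := max (gdist G w x (pv i x)) (max (gdist G w y (pv i y)) (gdist G w x y))
  by_cases hnear : ∃ a ∈ A (i + 1), gdist G w x a ≤ 4 * m
  · obtain ⟨a, ha, hxa⟩ := hnear
    have hne : (A (i + 1)).Nonempty := ⟨a, ha⟩
    refine Or.inr ⟨hne, ?_⟩
    calc _ ≤ gdist G w x (pv (i + 1) x) := gdist_emulGraph_pivot_le hwsym hA0 hAnest hAk hpv hne x
      _ ≤ gdist G w x a := (hpv _ (lt_of_level_nonempty hAnest hAk hne) x hne).2 a ha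
      _ ≤ 4 * m := hxa
  · push Not at hnear
    exact Or.inl <| gdist_emulGraph_le_five_mul hwsym hA0 hAnest hAk hpv hAi (le_max_left _ _)
      ((le_max_left _ _).trans (le_max_right _ _)) ((le_max_right _ _).trans (le_max_right _ _))
      hnear

/-- Lemma 3.2: with `m = max{d_G(x,p_i(x)), d_G(y,p_i(y)), d_G(x,y)}`, either
`d_H(x,y) ≤ 5m`, or `A_{i+1} ≠ ∅` and `d_H(x, p_{i+1}(x)) ≤ 4m`. -/
theorem statement1 [Fintype V] (G : SimpleGraph V) (hconn : G.Connected)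
    (w : V → V → ℝ≥0∞) (hwsym : ∀ u v, G.Adj u v → w u v = w v u)
    (hwfin : ∀ u v, G.Adj u v → w u v ≠ ⊤)
    (k : ℕ) (hk : 1 ≤ k) (A : ℕ → Set V) (hA0 : A 0 = Set.univ)
    (hAnest : ∀ i, A (i + 1) ⊆ A i) (hAk : A k = ∅)
    (pv : ℕ → V → V)
    (hpv : ∀ i, i < k → ∀ v : V, (A i).Nonempty →
      pv i v ∈ A i ∧ ∀ a ∈ A i, gdist G w v (pv i v) ≤ gdist G w v a)
    (i : ℕ) (hi : i < k) (hAi : (A i).Nonempty) (x y : V) :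
    gdist (emulGraph G w A pv k) (gdist G w) x y ≤
        5 * max (gdist G w x (pv i x)) (max (gdist G w y (pv i y)) (gdist G w x y)) ∨
      ((A (i + 1)).Nonempty ∧
        gdist (emulGraph G w A pv k) (gdist G w) x (pv (i + 1) x) ≤
          4 * max (gdist G w x (pv i x)) (max (gdist G w y (pv i y)) (gdist G w x y))) :=
  statement1_general G w hwsym k A hA0 hAnest hAk pv hpv i hAi x y

end ASP
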